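/- ℙ({ x ∈ Δ^{Words} : inf_{k≥1} liminf_{m→∞} (log₂ h_{m,1/k}(x))/m > 0 }) = 0; that is, for ℙ-almost every x, inf_{k≥1} liminf_{m→∞} (log₂ h_{m,1/k}(x))/m = 0. -/

import Mathlib

open MeasureTheory Filter Set
open scoped ENNReal NNReal

/-- The alphabet `Λ = {0,1}^d`, identified with `{0,…,2^d−1}`. -/
abbrev Lam (d : ℕ) := Fin d → Bool

/-- Finite words over the alphabet `Λ` (including the empty word). -/
abbrev Wd (d : ℕ) := List (Lam d)

/-- The ambient space `ℝ^{2^d}` (with the Euclidean metric), coordinates indexed by `Λ`. -/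
abbrev Pt (d : ℕ) := EuclideanSpace ℝ (Lam d)

/-- The simplex `Δ = {x : x_a ≥ 0, Σ_a x_a = 1}` in `ℝ^{2^d}`. -/
def simplexSet (d : ℕ) : Set (Pt d) := {p | (∀ a, 0 ≤ p a) ∧ (∑ a, p a) = 1}

/-- The uniform probability distribution `σ` on the simplex: the normalized restriction to
`Δ` of the `(2^d − 1)`-dimensional Hausdorff measure on `ℝ^{2^d}`. -/
noncomputable def sigmaMeas (d : ℕ) : Measure (Pt d) :=
  ((Measure.hausdorffMeasure ((2 ^ d : ℝ) - 1) : Measure (Pt d)) (simplexSet d))⁻¹ •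
    ((Measure.hausdorffMeasure ((2 ^ d : ℝ) - 1) : Measure (Pt d)).restrict (simplexSet d))

/-- Auxiliary recursion for labels: `labelFrom d x pre w` is the product, over the letters of
`w`, of the coordinates of `x` along the path starting at the node `pre`. -/
noncomputable def labelFrom (d : ℕ) (x : Wd d → Pt d) : Wd d → Wd d → ℝ
  | _, [] => 1
  | pre, a :: w => x pre a * labelFrom d x (pre ++ [a]) w

/-- The label `L(x,w) = Π_{j=1}^{k} x(w_1⋯w_{j−1})_{w_j}` of the word `w` (empty word ↦ 1). -/
noncomputable def label (d : ℕ) (x : Wd d → Pt d) (w : Wd d) : ℝ := labelFrom d x [] w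

/-- A word `w = w_1⋯w_m` is central if for each coordinate `i` the digit string
`(w_1(i),…,w_m(i))` equals `(0,1,1,…,1)` or `(1,0,0,…,0)`. -/
def IsCentral (d : ℕ) (w : Wd d) : Prop :=
  ∀ i : Fin d, ∃ b : Bool, w.map (fun a => a i) = b :: List.replicate (w.length - 1) (!b)

/-- The ratio `L(x,ω)/L(x,ωw)`, with the convention that a zero denominator gives `∞`. -/
noncomputable def ratio (d : ℕ) (x : Wd d → Pt d) (ω w : Wd d) : ℝ≥0∞ :=
  if label d x (ω ++ w) = 0 then ⊤ else ENNReal.ofReal (label d x ω / label d x (ω ++ w))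

/-- `h_{m,δ}(x)`: min over words `ω` of length `⌊m/δ⌋` of the min over central words `w`
of length `m` of `L(x,ω)/L(x,ωw)`. -/
noncomputable def hmd (d : ℕ) (x : Wd d → Pt d) (δ : ℝ) (m : ℕ) : ℝ≥0∞ :=
  ⨅ (ω : Wd d) (_ : ω.length = ⌊(m : ℝ) / δ⌋₊),
    ⨅ (w : Wd d) (_ : w.length = m ∧ IsCentral d w), ratio d x ω w

/-- Base-2 logarithm on `ℝ≥0∞` (with `log₂ ∞ = ∞`). -/
noncomputable def log2 (y : ℝ≥0∞) : ℝ≥0∞ :=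
  if y = ⊤ then ⊤ else ENNReal.ofReal (Real.logb 2 y.toReal)

/-- `liminf_{m→∞} (log₂ h_{m,δ}(x)) / m`. -/
noncomputable def liminfh (d : ℕ) (x : Wd d → Pt d) (δ : ℝ) : ℝ≥0∞ :=
  Filter.liminf (fun m : ℕ => log2 (hmd d x δ m) / (m : ℝ≥0∞)) Filter.atTop


/-!
Fix `ε > 0` and `θ = 2^{-ε} < 1`. Starting from a word `ω` and following the central word
`0 1 ⋯ 1` (in every coordinate), the ratio `L(x,ω)/L(x,ωw)` is, as long as no coordinate of `x`
vanishes (an almost sure event), the inverse of the product of the `m` coordinates met along the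
way, so it is at most `θ^{-m}` as soon as each of them is `≥ θ`.
This happens with probability at least `ρ^m`, where `ρ = min_a σ{x_a ≥ θ} > 0`, and the
`2^{dmk}` paths starting at depth `mk` visit pairwise distinct nodes, hence are independent.
Choosing `k` with `ρ 2^{dk} ≥ 2`, all of them fail with probability at most
`exp(-(ρ 2^{dk})^m) ≤ e^{-m}`, and Borel–Cantelli gives `liminf_m log₂ h_{m,1/k}/m ≤ ε` almost
surely.

The facts about `σ` (it is a probability measure, `{x_a ≥ θ}` has positive mass and the faces
`{x_a = 0}` are null) come from comparing `μH[n-1]` on the hyperplane `∑ x = 1` with the Lebesgue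
measure of its projection forgetting one coordinate, which is bi-Lipschitz there.
-/

section Simplex

variable {ι : Type*} [Fintype ι] [DecidableEq ι]

def dropCoord (a : ι) (p : EuclideanSpace ℝ ι) : {b // b ≠ a} → ℝ := fun b => p b

def fillCoord (a : ι) (y : {b // b ≠ a} → ℝ) : EuclideanSpace ℝ ι :=
  WithLp.toLp 2 fun b => if h : b = a then 1 - ∑ c, y c else y ⟨b, h⟩

theorem lipschitzWith_dropCoord (a : ι) : LipschitzWith 1 (dropCoord a) := by
  refine LipschitzWith.of_dist_le_mul fun p q => ?_
  rw [NNReal.coe_one, one_mul]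
  exact (dist_pi_le_iff dist_nonneg).2 fun b => PiLp.dist_apply_le p q b

theorem exists_lipschitzWith_fillCoord (a : ι) : ∃ K, LipschitzWith K (fillCoord a) := by
  have hn : (1 : ℝ) ≤ Fintype.card ι := Nat.one_le_cast.2 (Fintype.card_pos_iff.2 ⟨a⟩)
  have hfill : LipschitzWith (Fintype.card ι) fun y : {b // b ≠ a} → ℝ =>
      fun b => if h : b = a then 1 - ∑ c, y c else y ⟨b, h⟩ := by
    refine LipschitzWith.of_dist_le_mul fun y z => (dist_pi_le_iff (by positivity)).2 fun b => ?_
    have hcoord : ∀ c, dist (y c) (z c) ≤ dist y z := fun c => dist_le_pi_dist y z c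
    by_cases h : b = a
    · simp only [h, dite_true, dist_sub_left]
      calc dist (∑ c, y c) (∑ c, z c) ≤ ∑ c, dist (y c) (z c) := dist_sum_sum_le _ _ _
        _ ≤ ∑ _c : {b // b ≠ a}, dist y z := Finset.sum_le_sum fun c _ => hcoord c
        _ ≤ Fintype.card ι * dist y z := by
          rw [Finset.sum_const, Finset.card_univ, nsmul_eq_mul]
          gcongr
          exact Fintype.card_subtype_le _
    · simp only [h, dite_false]
      exact (hcoord _).trans (le_mul_of_one_le_left dist_nonneg (by simpa using hn))
  exact ⟨_, (PiLp.lipschitzWith_toLp 2 _).comp hfill⟩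

theorem sum_eq_add_sum_dropCoord (a : ι) (p : EuclideanSpace ℝ ι) :
    ∑ b, p b = p a + ∑ c, dropCoord a p c :=
  Fintype.sum_eq_add_sum_subtype_ne _ a

theorem dropCoord_fillCoord (a : ι) (y : {b // b ≠ a} → ℝ) : dropCoord a (fillCoord a y) = y := by
  funext c
  simp [dropCoord, fillCoord, c.2]

theorem fillCoord_apply_self (a : ι) (y : {b // b ≠ a} → ℝ) : fillCoord a y a = 1 - ∑ c, y c := by
  simp [fillCoord]

theorem fillCoord_dropCoord {a : ι} {p : EuclideanSpace ℝ ι} (hp : ∑ b, p b = 1) :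
    fillCoord a (dropCoord a p) = p := by
  ext b
  by_cases h : b = a
  · subst h
    rw [fillCoord_apply_self]
    linarith [sum_eq_add_sum_dropCoord b p]
  · simp [fillCoord, dropCoord, h]

theorem sum_fillCoord (a : ι) (y : {b // b ≠ a} → ℝ) : ∑ b, fillCoord a y b = 1 := by
  rw [sum_eq_add_sum_dropCoord a, dropCoord_fillCoord, fillCoord_apply_self, sub_add_cancel]

theorem hausdorffMeasure_card_sub_one_eq_volume (a : ι) :
    (μH[(Fintype.card ι : ℝ) - 1] : Measure ({b // b ≠ a} → ℝ)) = volume := by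
  have hcard : Fintype.card {b // b ≠ a} = Fintype.card ι - 1 := by
    rw [Fintype.card_subtype_compl, Fintype.card_subtype_eq]
  have hpos : 1 ≤ Fintype.card ι := Fintype.card_pos_iff.2 ⟨a⟩
  rw [← hausdorffMeasure_pi_real, hcard, Nat.cast_sub hpos, Nat.cast_one]

theorem volume_image_dropCoord_le (a : ι) (A : Set (EuclideanSpace ℝ ι)) :
    volume (dropCoord a '' A) ≤ μH[(Fintype.card ι : ℝ) - 1] A := by
  have hs : (0 : ℝ) ≤ Fintype.card ι - 1 :=
    sub_nonneg.2 (Nat.one_le_cast.2 (Fintype.card_pos_iff.2 ⟨a⟩))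
  rw [← hausdorffMeasure_card_sub_one_eq_volume a]
  simpa using (lipschitzWith_dropCoord a).hausdorffMeasure_image_le hs A

theorem exists_hausdorffMeasure_le_volume_image_dropCoord (a : ι) :
    ∃ C : ℝ≥0∞, C ≠ ⊤ ∧ ∀ A ⊆ {p : EuclideanSpace ℝ ι | ∑ b, p b = 1},
      μH[(Fintype.card ι : ℝ) - 1] A ≤ C * volume (dropCoord a '' A) := by
  obtain ⟨K, hK⟩ := exists_lipschitzWith_fillCoord a
  have hs : (0 : ℝ) ≤ Fintype.card ι - 1 :=
    sub_nonneg.2 (Nat.one_le_cast.2 (Fintype.card_pos_iff.2 ⟨a⟩))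
  refine ⟨(K : ℝ≥0∞) ^ ((Fintype.card ι : ℝ) - 1), ENNReal.rpow_ne_top_of_nonneg hs (by simp),
    fun A hA => ?_⟩
  have hAfill : A ⊆ fillCoord a '' (dropCoord a '' A) := fun p hp =>
    ⟨dropCoord a p, ⟨p, hp, rfl⟩, fillCoord_dropCoord (hA hp)⟩
  rw [← hausdorffMeasure_card_sub_one_eq_volume a]
  exact (measure_mono hAfill).trans (hK.hausdorffMeasure_image_le hs _)

local notation "Δ" => (WithLp.ofLp ⁻¹' stdSimplex ℝ ι : Set (EuclideanSpace ℝ ι))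

theorem hausdorffMeasure_stdSimplex_ne_top [Nonempty ι] : μH[(Fintype.card ι : ℝ) - 1] Δ ≠ ⊤ := by
  let a := Classical.arbitrary ι
  obtain ⟨C, hC, hle⟩ := exists_hausdorffMeasure_le_volume_image_dropCoord a
  have hcube : dropCoord a '' Δ ⊆ univ.pi fun _ => Icc 0 1 := by
    rintro _ ⟨p, hp, rfl⟩ c -
    exact mem_Icc_of_mem_stdSimplex hp c
  refine (lt_of_le_of_lt ?_ hC.lt_top).ne
  calc μH[(Fintype.card ι : ℝ) - 1] Δ ≤ C * volume (dropCoord a '' Δ) := hle _ fun p hp => hp.2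
    _ ≤ C * volume (univ.pi fun _ => Icc (0 : ℝ) 1) := by gcongr
    _ = C := by simp [Real.volume_Icc_pi]

theorem hausdorffMeasure_stdSimplex_inter_le_apply_pos (a : ι) {θ : ℝ} (hθ0 : 0 ≤ θ)
    (hθ1 : θ < 1) : 0 < μH[(Fintype.card ι : ℝ) - 1] (Δ ∩ {p | θ ≤ p a}) := by
  set n : ℝ := (Fintype.card ι : ℝ)
  have hn : 1 ≤ n := Nat.one_le_cast.2 (Fintype.card_pos_iff.2 ⟨a⟩)
  let box : Set ({b // b ≠ a} → ℝ) := univ.pi fun _ => Ioo 0 ((1 - θ) / n)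
  have hbox : box ⊆ dropCoord a '' (Δ ∩ {p | θ ≤ p a}) := by
    intro y hy
    have hsum : ∑ c, y c ≤ 1 - θ :=
      calc ∑ c, y c ≤ ∑ _c : {b // b ≠ a}, (1 - θ) / n :=
            Finset.sum_le_sum fun c _ => (hy c trivial).2.le
        _ ≤ n * ((1 - θ) / n) := by
          rw [Finset.sum_const, Finset.card_univ, nsmul_eq_mul]
          have : 0 ≤ (1 - θ) / n := div_nonneg (by linarith) (by linarith)
          gcongr
          exact Nat.cast_le.2 (Fintype.card_subtype_le _)
        _ = 1 - θ := by field_simp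
    have hθa : θ ≤ fillCoord a y a := by rw [fillCoord_apply_self]; linarith
    refine ⟨fillCoord a y, ⟨⟨fun b => ?_, sum_fillCoord a y⟩, hθa⟩, dropCoord_fillCoord a y⟩
    by_cases h : b = a
    · subst h; linarith
    · simpa [fillCoord, h] using (hy ⟨b, h⟩ trivial).1.le
  have hvol : 0 < volume box := by
    rw [Real.volume_pi_Ioo]
    refine CanonicallyOrderedAdd.prod_pos.2 fun _ _ => ENNReal.ofReal_pos.2 ?_
    have : 0 < (1 - θ) / n := div_pos (by linarith) (by linarith)
    linarith
  exact hvol.trans_le ((measure_mono hbox).trans (volume_image_dropCoord_le a _))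

theorem hausdorffMeasure_stdSimplex_inter_apply_eq_zero [Nontrivial ι] (a : ι) :
    μH[(Fintype.card ι : ℝ) - 1] (Δ ∩ {p | p a = 0}) = 0 := by
  obtain ⟨a', ha'⟩ := exists_ne a
  obtain ⟨C, -, hle⟩ := exists_hausdorffMeasure_le_volume_image_dropCoord a'
  have hface : dropCoord a' '' (Δ ∩ {p | p a = 0}) ⊆ {y | y ⟨a, ha'.symm⟩ = 0} := by
    rintro _ ⟨p, hp, rfl⟩
    exact hp.2
  have hnull : volume {y : {b // b ≠ a'} → ℝ | y ⟨a, ha'.symm⟩ = 0} = 0 := by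
    rw [volume_pi]
    exact Measure.pi_hyperplane _ _ _
  refine le_antisymm ((hle _ fun p hp => hp.1.2).trans ?_) bot_le
  rw [measure_mono_null hface hnull, mul_zero]

end Simplex

section IndependentCoordinates

variable {A β : Type*} [MeasurableSpace β] (σ : Measure β) [IsProbabilityMeasure σ]

theorem map_infinitePi_uncurry_of_injective {Ω J : Type*} [Fintype Ω] [Fintype J]
    {node : Ω → J → A} (hnode : Function.Injective (Function.uncurry node)) :
    (Measure.infinitePi fun _ : A => σ).map (fun x ω j => x (node ω j)) =
      Measure.pi fun _ : Ω => Measure.pi fun _ : J => σ := by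
  have hcurry : (fun x ω j => x (node ω j)) =
      MeasurableEquiv.curry Ω J β ∘ fun (x : A → β) p => x (Function.uncurry node p) := rfl
  rw [hcurry, ← Measure.map_map (by fun_prop) (by fun_prop),
    Measure.map_infinitePi_infinitePi_of_inj hnode, Measure.infinitePi_map_curry (fun _ _ => σ),
    Measure.infinitePi_eq_pi]
  simp_rw [Measure.infinitePi_eq_pi]

theorem infinitePi_setOf_forall_exists_notMem {Ω J : Type*} [Fintype Ω] [Fintype J]
    {node : Ω → J → A} (hnode : Function.Injective (Function.uncurry node))
    {S : J → Set β} (hS : ∀ j, MeasurableSet (S j)) :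
    Measure.infinitePi (fun _ : A => σ) {x | ∀ ω, ∃ j, x (node ω j) ∉ S j} =
      (1 - ∏ j, σ (S j)) ^ Fintype.card Ω := by
  have hset : {x : A → β | ∀ ω, ∃ j, x (node ω j) ∉ S j} =
      (fun x ω j => x (node ω j)) ⁻¹' univ.pi fun _ => (univ.pi S)ᶜ := by
    ext x
    simp
  have hmeas : MeasurableSet (univ.pi S) := MeasurableSet.univ_pi hS
  rw [hset, ← Measure.map_apply (by fun_prop) (MeasurableSet.univ_pi fun _ => hmeas.compl),
    map_infinitePi_uncurry_of_injective σ hnode, Measure.pi_pi, prob_compl_eq_one_sub hmeas,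
    Measure.pi_pi, Finset.prod_const, Finset.card_univ]

end IndependentCoordinates

theorem sigmaMeas_apply (d : ℕ) {s : Set (Pt d)} (hs : MeasurableSet s) :
    sigmaMeas d s = (μH[(Fintype.card (Lam d) : ℝ) - 1] (simplexSet d))⁻¹ *
      μH[(Fintype.card (Lam d) : ℝ) - 1] (simplexSet d ∩ s) := by
  have hexp : (2 ^ d : ℝ) - 1 = (Fintype.card (Lam d) : ℝ) - 1 := by simp
  rw [sigmaMeas, hexp, Measure.smul_apply, smul_eq_mul, Measure.restrict_apply hs, Set.inter_comm]

instance isProbabilityMeasure_sigmaMeas (d : ℕ) : IsProbabilityMeasure (sigmaMeas d) := by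
  have hpos :=
    hausdorffMeasure_stdSimplex_inter_le_apply_pos (fun _ : Fin d => false) le_rfl one_pos
  constructor
  rw [sigmaMeas_apply d MeasurableSet.univ, Set.inter_univ]
  exact ENNReal.inv_mul_cancel (hpos.trans_le (measure_mono Set.inter_subset_left)).ne'
    hausdorffMeasure_stdSimplex_ne_top

theorem measurableSet_setOf_le_apply (d : ℕ) (a : Lam d) (θ : ℝ) :
    MeasurableSet {p : Pt d | θ ≤ p a} :=
  measurableSet_le measurable_const (by fun_prop)

theorem sigmaMeas_setOf_le_apply_pos (d : ℕ) (a : Lam d) {θ : ℝ} (hθ0 : 0 ≤ θ) (hθ1 : θ < 1) :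
    0 < sigmaMeas d {p | θ ≤ p a} := by
  rw [sigmaMeas_apply d (measurableSet_setOf_le_apply d a θ)]
  exact ENNReal.mul_pos (ENNReal.inv_ne_zero.2 hausdorffMeasure_stdSimplex_ne_top)
    (hausdorffMeasure_stdSimplex_inter_le_apply_pos a hθ0 hθ1).ne'

theorem sigmaMeas_setOf_apply_eq_zero {d : ℕ} (hd : 1 ≤ d) (a : Lam d) :
    sigmaMeas d {p | p a = 0} = 0 := by
  have : Nonempty (Fin d) := ⟨⟨0, hd⟩⟩
  rw [sigmaMeas_apply d (measurableSet_eq_fun (by fun_prop) measurable_const)]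
  exact mul_eq_zero_of_right _ (hausdorffMeasure_stdSimplex_inter_apply_eq_zero a)

section Labels

variable {d : ℕ} (x : Wd d → Pt d)

theorem labelFrom_append (u : Wd d) :
    ∀ pre v, labelFrom d x pre (u ++ v) = labelFrom d x pre u * labelFrom d x (pre ++ u) v := by
  induction u with
  | nil => intro pre v; simp [labelFrom]
  | cons a u ih =>
    intro pre v
    simp [labelFrom, ih, mul_assoc]

theorem labelFrom_ne_zero (hx : ∀ u a, x u a ≠ 0) (w : Wd d) : ∀ pre, labelFrom d x pre w ≠ 0 := by
  induction w with
  | nil => intro pre; simp [labelFrom]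
  | cons a w ih => intro pre; exact mul_ne_zero (hx _ _) (ih _)

theorem pow_length_le_labelFrom {θ : ℝ} (hθ : 0 ≤ θ) (w : Wd d) :
    ∀ pre, (∀ (j : ℕ) (hj : j < w.length), θ ≤ x (pre ++ w.take j) w[j]) →
      θ ^ w.length ≤ labelFrom d x pre w := by
  induction w with
  | nil => intro pre _; simp [labelFrom]
  | cons a w ih =>
    intro pre h
    have hhead : θ ≤ x pre a := by
      have h0 := h 0 (by simp)
      rwa [List.take_zero, List.append_nil] at h0
    have htail : θ ^ w.length ≤ labelFrom d x (pre ++ [a]) w := by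
      refine ih _ fun j hj => ?_
      have hj1 := h (j + 1) (by simpa using hj)
      rwa [List.take_succ_cons, ← List.singleton_append, ← List.append_assoc] at hj1
    rw [List.length_cons, pow_succ']
    exact mul_le_mul hhead htail (pow_nonneg hθ _) (hθ.trans hhead)

theorem ratio_eq_ofReal_inv_labelFrom (hx : ∀ u a, x u a ≠ 0) (ω w : Wd d) :
    ratio d x ω w = ENNReal.ofReal (labelFrom d x ω w)⁻¹ := by
  have hsplit : label d x (ω ++ w) = label d x ω * labelFrom d x ω w := by
    rw [label, labelFrom_append, label, List.nil_append]
  have hω : label d x ω ≠ 0 := labelFrom_ne_zero x hx ω []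
  rw [ratio, if_neg (hsplit ▸ mul_ne_zero hω (labelFrom_ne_zero x hx w ω)), hsplit,
    div_mul_cancel_left₀ hω]

end Labels

def centralLetter (d j : ℕ) : Lam d := fun _ => decide (j ≠ 0)

def centralWord (d m : ℕ) : Wd d := List.ofFn fun j : Fin m => centralLetter d j

theorem isCentral_centralWord (d : ℕ) {m : ℕ} (hm : 1 ≤ m) : IsCentral d (centralWord d m) := by
  obtain ⟨m, rfl⟩ := Nat.exists_eq_add_of_le' hm
  intro i
  refine ⟨false, ?_⟩
  simp [centralWord, centralLetter, List.ofFn_succ, List.map_ofFn, Function.comp_def]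

theorem getElem_centralWord (d m j : ℕ) (hj : j < (centralWord d m).length) :
    (centralWord d m)[j] = centralLetter d j := by
  simp [centralWord]

def pathNode (d m : ℕ) {n : ℕ} (ω : Fin n → Lam d) (j : Fin m) : Wd d :=
  List.ofFn ω ++ (centralWord d m).take j

theorem injective_uncurry_pathNode (d m n : ℕ) :
    Function.Injective (Function.uncurry (pathNode d m (n := n))) := by
  rintro ⟨ω, j⟩ ⟨ω', j'⟩ h
  have hlen := congrArg List.length h
  simp only [Function.uncurry, pathNode, centralWord, List.length_append, List.length_ofFn,
    List.length_take] at hlen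
  obtain rfl : j = j' := Fin.ext (by omega)
  obtain rfl : ω = ω' := List.ofFn_injective (List.append_inj_left h (by simp))
  rfl

section GrowthBound

variable {d : ℕ} {x : Wd d → Pt d}

theorem hmd_le_ofReal_inv_pow (hx : ∀ u a, x u a ≠ 0) {k m : ℕ} (hm : 1 ≤ m) {θ : ℝ}
    (hθ : 0 < θ) (ω : Fin (m * k) → Lam d)
    (hω : ∀ j : Fin m, θ ≤ x (pathNode d m ω j) (centralLetter d j)) :
    hmd d x (1 / k) m ≤ ENNReal.ofReal (θ ^ m)⁻¹ := by
  have hlen : (List.ofFn ω).length = ⌊(m : ℝ) / (1 / k)⌋₊ := by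
    rw [List.length_ofFn, one_div, div_inv_eq_mul, ← Nat.cast_mul, Nat.floor_natCast]
  have hword : (centralWord d m).length = m ∧ IsCentral d (centralWord d m) :=
    ⟨List.length_ofFn, isCentral_centralWord d hm⟩
  have hlabel : θ ^ m ≤ labelFrom d x (List.ofFn ω) (centralWord d m) := by
    have := pow_length_le_labelFrom x hθ.le (centralWord d m) (List.ofFn ω) fun j hj => by
      rw [getElem_centralWord]
      exact hω ⟨j, hword.1 ▸ hj⟩
    rwa [hword.1] at this
  calc hmd d x (1 / k) m ≤ ratio d x (List.ofFn ω) (centralWord d m) :=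
        iInf₂_le_of_le (List.ofFn ω) hlen (iInf₂_le (centralWord d m) hword)
    _ = ENNReal.ofReal (labelFrom d x (List.ofFn ω) (centralWord d m))⁻¹ :=
        ratio_eq_ofReal_inv_labelFrom x hx _ _
    _ ≤ ENNReal.ofReal (θ ^ m)⁻¹ := ENNReal.ofReal_le_ofReal (inv_anti₀ (pow_pos hθ m) hlabel)

theorem log2_le_of_le_ofReal_two_rpow {y : ℝ≥0∞} {t : ℝ} (h : y ≤ ENNReal.ofReal (2 ^ t)) :
    log2 y ≤ ENNReal.ofReal t := by
  rw [log2, if_neg (ne_top_of_le_ne_top ENNReal.ofReal_ne_top h)]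
  rcases ENNReal.toReal_nonneg.eq_or_lt with h0 | h0
  · rw [← h0, Real.logb_zero, ENNReal.ofReal_zero]
    exact bot_le
  · refine ENNReal.ofReal_le_ofReal ?_
    calc Real.logb 2 y.toReal ≤ Real.logb 2 (2 ^ t) :=
          Real.logb_le_logb_of_le one_lt_two h0 (ENNReal.toReal_le_of_le_ofReal (by positivity) h)
      _ = t := Real.logb_rpow two_pos (by norm_num)

theorem liminfh_le_ofReal (hx : ∀ u a, x u a ≠ 0) {k : ℕ} {ε : ℝ}
    (h : ∀ᶠ m in atTop, ∃ ω : Fin (m * k) → Lam d,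
      ∀ j : Fin m, (2 : ℝ) ^ (-ε) ≤ x (pathNode d m ω j) (centralLetter d j)) :
    liminfh d x (1 / k) ≤ ENNReal.ofReal ε := by
  unfold liminfh
  refine (liminf_le_liminf ?_).trans_eq (liminf_const (ENNReal.ofReal ε))
  filter_upwards [h, eventually_ge_atTop 1] with m ⟨ω, hω⟩ hm
  have hbound := hmd_le_ofReal_inv_pow hx hm (by positivity) ω hω
  rw [← Real.rpow_natCast, ← Real.rpow_mul zero_le_two, ← Real.rpow_neg zero_le_two, neg_mul,
    neg_neg] at hbound
  refine ENNReal.div_le_of_le_mul ?_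
  rw [← ENNReal.ofReal_natCast, ← ENNReal.ofReal_mul' m.cast_nonneg]
  exact log2_le_of_le_ofReal_two_rpow hbound

end GrowthBound

theorem one_sub_ofReal_pow_pow_le {ρ : ℝ} {c : ℕ} (hρ : 0 ≤ ρ) (hc : 2 ≤ ρ * c) (m : ℕ) :
    (1 - ENNReal.ofReal (ρ ^ m)) ^ (c ^ m) ≤ ENNReal.ofReal (Real.exp (-1) ^ m) := by
  have hm : (m : ℝ) ≤ ρ ^ m * (c ^ m : ℕ) :=
    calc (m : ℝ) ≤ 2 ^ m := by exact_mod_cast m.lt_two_pow_self.le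
      _ ≤ (ρ * c) ^ m := pow_le_pow_left₀ zero_le_two hc m
      _ = ρ ^ m * (c ^ m : ℕ) := by push_cast; ring
  calc (1 - ENNReal.ofReal (ρ ^ m)) ^ (c ^ m)
      ≤ ENNReal.ofReal (Real.exp (-(ρ ^ m))) ^ (c ^ m) := by
        gcongr
        rw [← ENNReal.ofReal_one, ← ENNReal.ofReal_sub _ (pow_nonneg hρ m)]
        exact ENNReal.ofReal_le_ofReal (Real.one_sub_le_exp_neg _)
    _ = ENNReal.ofReal (Real.exp (-(ρ ^ m * (c ^ m : ℕ)))) := by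
        rw [← ENNReal.ofReal_pow (Real.exp_pos _).le, ← Real.exp_nat_mul]
        ring_nf
    _ ≤ ENNReal.ofReal (Real.exp (-1) ^ m) := by
        rw [← Real.exp_nat_mul]
        exact ENNReal.ofReal_le_ofReal (Real.exp_le_exp.2 (by linarith))

theorem infinitePi_setOf_forall_exists_lt_le (d : ℕ) {θ ρ : ℝ} (hρ : 0 ≤ ρ)
    (hρθ : ∀ a : Lam d, ENNReal.ofReal ρ ≤ sigmaMeas d {p | θ ≤ p a})
    {k : ℕ} (hk : 2 ≤ ρ * ((2 ^ d) ^ k : ℕ)) (m : ℕ) :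
    Measure.infinitePi (fun _ : Wd d => sigmaMeas d)
        {x | ∀ ω : Fin (m * k) → Lam d, ∃ j : Fin m, x (pathNode d m ω j) (centralLetter d j) < θ}
      ≤ ENNReal.ofReal (Real.exp (-1) ^ m) := by
  have hset : {x : Wd d → Pt d | ∀ ω : Fin (m * k) → Lam d, ∃ j : Fin m,
      x (pathNode d m ω j) (centralLetter d j) < θ} =
      {x | ∀ ω : Fin (m * k) → Lam d, ∃ j : Fin m,
        x (pathNode d m ω j) ∉ {p : Pt d | θ ≤ p (centralLetter d j)}} := by
    simp only [mem_ofPred_eq, not_le]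
  have hprod : ENNReal.ofReal (ρ ^ m) ≤ ∏ j : Fin m, sigmaMeas d {p | θ ≤ p (centralLetter d j)} :=
    calc ENNReal.ofReal (ρ ^ m) = ∏ _j : Fin m, ENNReal.ofReal ρ := by
          simp [ENNReal.ofReal_pow hρ]
      _ ≤ _ := Finset.prod_le_prod' fun j _ => hρθ _
  have hcard : Fintype.card (Fin (m * k) → Lam d) = ((2 ^ d) ^ k) ^ m := by
    simp only [Fintype.card_fun, Fintype.card_fin, Fintype.card_bool, ← pow_mul]
    ring_nf
  rw [hset, infinitePi_setOf_forall_exists_notMem _ (injective_uncurry_pathNode d m _)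
    fun j => measurableSet_setOf_le_apply d _ θ, hcard]
  calc _ ≤ (1 - ENNReal.ofReal (ρ ^ m)) ^ ((2 ^ d) ^ k) ^ m := by gcongr
    _ ≤ _ := one_sub_ofReal_pow_pow_le hρ hk m

theorem ae_eventually_exists_pathNode_le {d : ℕ} (hd : 1 ≤ d) {θ : ℝ} (hθ0 : 0 ≤ θ)
    (hθ1 : θ < 1) :
    ∃ k : ℕ, 1 ≤ k ∧ ∀ᵐ x ∂(Measure.infinitePi fun _ : Wd d => sigmaMeas d), ∀ᶠ m in atTop,
      ∃ ω : Fin (m * k) → Lam d, ∀ j : Fin m, θ ≤ x (pathNode d m ω j) (centralLetter d j) := by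
  obtain ⟨a₀, ha₀⟩ := Finite.exists_min fun a : Lam d => sigmaMeas d {p | θ ≤ p a}
  set ρ := (sigmaMeas d {p | θ ≤ p a₀}).toReal
  have hρ : 0 < ρ :=
    ENNReal.toReal_pos (sigmaMeas_setOf_le_apply_pos d a₀ hθ0 hθ1).ne' (measure_ne_top _ _)
  have hρθ : ∀ a, ENNReal.ofReal ρ ≤ sigmaMeas d {p | θ ≤ p a} := fun a => by
    rw [ENNReal.ofReal_toReal (measure_ne_top _ _)]
    exact ha₀ a
  have hbase : (1 : ℝ) < (2 ^ d : ℕ) := by exact_mod_cast Nat.one_lt_two_pow (by omega)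
  obtain ⟨k, hk1, hk⟩ := ((eventually_ge_atTop 1).and
    ((tendsto_pow_atTop_atTop_of_one_lt hbase).eventually_gt_atTop (2 / ρ))).exists
  refine ⟨k, hk1, ?_⟩
  have hkρ : 2 ≤ ρ * ((2 ^ d) ^ k : ℕ) := by
    push_cast at hk ⊢
    exact ((div_lt_iff₀' hρ).1 hk).le
  have hsum := ENNReal.tsum_le_tsum (infinitePi_setOf_forall_exists_lt_le d hρ.le hρθ hkρ)
  rw [← ENNReal.ofReal_tsum_of_nonneg (fun m => by positivity)
    (summable_geometric_of_lt_one (Real.exp_pos _).le (Real.exp_lt_one_iff.2 (by norm_num)))]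
    at hsum
  filter_upwards [measure_eq_zero_iff_ae_notMem.1
    (measure_setOfPred_frequently_eq_zero (ne_top_of_le_ne_top ENNReal.ofReal_ne_top hsum))]
    with x hx
  simpa [Filter.not_frequently] using hx

theorem ae_apply_ne_zero {d : ℕ} (hd : 1 ≤ d) :
    ∀ᵐ x ∂(Measure.infinitePi fun _ : Wd d => sigmaMeas d), ∀ u a, x u a ≠ 0 := by
  refine ae_all_iff.2 fun u => ae_all_iff.2 fun a => ?_
  have h : ∀ᵐ p ∂(sigmaMeas d), p a ≠ 0 :=
    measure_eq_zero_iff_ae_notMem.1 (sigmaMeas_setOf_apply_eq_zero hd a)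
  rw [← Measure.infinitePi_map_eval (fun _ : Wd d => sigmaMeas d) u] at h
  exact ae_of_ae_map (f := fun x : Wd d → Pt d => x u) (measurable_pi_apply u).aemeasurable h

theorem stmt13_general (d : ℕ) (hd : 1 ≤ d) (P : Measure (Wd d → Pt d))
    (hP : ∀ F : Finset (Wd d),
      P.map (fun x (w : F) => x (w : Wd d)) = Measure.pi fun _ : F => sigmaMeas d) :
    P {x : Wd d → Pt d | 0 < ⨅ (k : ℕ) (_ : 1 ≤ k), liminfh d x (1 / (k : ℝ))} = 0 ∧
    ∀ᵐ x ∂P, (⨅ (k : ℕ) (_ : 1 ≤ k), liminfh d x (1 / (k : ℝ))) = 0 := by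
  -- `hP` says that `P` is the projective limit of the finite products of `σ`.
  obtain rfl : P = Measure.infinitePi fun _ => sigmaMeas d :=
    IsProjectiveLimit.unique hP (Measure.isProjectiveLimit_infinitePi _)
  choose k hk1 hk using fun i : ℕ => ae_eventually_exists_pathNode_le hd
    (Real.rpow_pos_of_pos two_pos (-(1 / (i + 1) : ℝ))).le
    (Real.rpow_lt_one_of_one_lt_of_neg one_lt_two (by rw [neg_lt_zero]; positivity))
  have hlim : Tendsto (fun i : ℕ => ENNReal.ofReal (1 / (i + 1))) atTop (nhds 0) := by
    simpa using ENNReal.tendsto_ofReal tendsto_one_div_add_atTop_nhds_zero_nat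
  have hae : ∀ᵐ x ∂(Measure.infinitePi fun _ => sigmaMeas d),
      (⨅ (k : ℕ) (_ : 1 ≤ k), liminfh d x (1 / (k : ℝ))) = 0 := by
    filter_upwards [ae_apply_ne_zero hd, ae_all_iff.2 hk] with x hx0 hx
    refine le_antisymm (ge_of_tendsto' hlim fun i => ?_) bot_le
    exact (iInf₂_le (k i) (hk1 i)).trans (liminfh_le_ofReal hx0 (hx i))
  refine ⟨?_, hae⟩
  simpa only [pos_iff_ne_zero] using ae_iff.1 hae

/-- `ℙ(inf_{k≥1} liminf_m (log₂ h_{m,1/k})/m > 0) = 0`; that is, for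
`ℙ`-a.e. `x`, `inf_{k≥1} liminf_m (log₂ h_{m,1/k}(x))/m = 0`. -/
theorem stmt13 (d : ℕ) (hd : 1 ≤ d) (P : Measure (Wd d → Pt d)) [IsProbabilityMeasure P]
    (hP : ∀ F : Finset (Wd d),
      P.map (fun x (w : F) => x (w : Wd d)) = Measure.pi fun _ : F => sigmaMeas d) :
    P {x : Wd d → Pt d | 0 < ⨅ (k : ℕ) (_ : 1 ≤ k), liminfh d x (1 / (k : ℝ))} = 0 ∧
    ∀ᵐ x ∂P, (⨅ (k : ℕ) (_ : 1 ≤ k), liminfh d x (1 / (k : ℝ))) = 0 :=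
  stmt13_general d hd P hP
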